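/- arXiv:1609.02840 — 2 statements merged into one kernel-verified Lean document; each statement's English description precedes it below -/
import Mathlib

section
/- The operators Γ_0 and conjugate Γ̄_0 satisfy the intertwining relations Γ_0 (w̄ g) = n w̄ g - w̄ (Γ̄_0 g) and Γ̄_0 (w g) = n w g - w (Γ_0 g) for smooth Cl_n-valued functions g, where w denotes the paravector-valued identity function (multiplication by the variable) restricted to the unit sphere. -/
open CliffordAlgebra

noncomputable section

/-- The quadratic form `x ↦ -‖x‖²` on `ℝⁿ`, so that vectors satisfy `x² = -‖x‖²`. -/
def Qneg (n : ℕ) : QuadraticForm ℝ (EuclideanSpace ℝ (Fin n)) :=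
  -(LinearMap.BilinMap.toQuadraticMap (innerₗ (EuclideanSpace ℝ (Fin n))))

/-- `ℝ^{n+1}`, with coordinates `x_0, …, x_n`. -/
abbrev Esp (n : ℕ) := EuclideanSpace ℝ (Fin (n + 1))

/-- The partial derivative `∂_{x_j}` of an `A`-valued function on `ℝ^{n+1}`. -/
def pd {n : ℕ} {A : Type*} [NormedRing A] [NormedAlgebra ℝ A]
    (j : Fin (n + 1)) (f : Esp n → A) (x : Esp n) : A :=
  fderiv ℝ f x (EuclideanSpace.single j 1)

/-- The generator `e_i` of `Cl_n`, realized in `A` via `φ`. -/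
def eV {n : ℕ} {A : Type*} [NormedRing A] [NormedAlgebra ℝ A]
    (φ : CliffordAlgebra (Qneg n) →ₐ[ℝ] A) (i : Fin n) : A :=
  φ (ι (Qneg n) (EuclideanSpace.single i 1))

/-- The Euler operator `E_r = Σ_j x_j ∂_{x_j}`. -/
def Euler {n : ℕ} {A : Type*} [NormedRing A] [NormedAlgebra ℝ A]
    (f : Esp n → A) (x : Esp n) : A :=
  ∑ j : Fin (n + 1), x j • pd j f x

/-- The Euclidean Dirac operator `D_0 = e_0 ∂_{x_0} + Σ_{i=1}^n e_i ∂_{x_i}` (with `e_0 = 1`). -/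
def D0 {n : ℕ} {A : Type*} [NormedRing A] [NormedAlgebra ℝ A]
    (φ : CliffordAlgebra (Qneg n) →ₐ[ℝ] A) (f : Esp n → A) (x : Esp n) : A :=
  pd 0 f x + ∑ i : Fin n, eV φ i * pd i.succ f x

/-- The spherical Gamma operator
`Γ_0 = Σ_{j=1}^n e_0 e_j (x_0 ∂_{x_j} - x_j ∂_{x_0})
     - Σ_{1 ≤ i < j ≤ n} e_i e_j (x_i ∂_{x_j} - x_j ∂_{x_i})`. -/
def Gamma0 {n : ℕ} {A : Type*} [NormedRing A] [NormedAlgebra ℝ A]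
    (φ : CliffordAlgebra (Qneg n) →ₐ[ℝ] A) (f : Esp n → A) (x : Esp n) : A :=
  (∑ j : Fin n, eV φ j * (x 0 • pd j.succ f x - x j.succ • pd 0 f x)) -
    ∑ i : Fin n, ∑ j : Fin n,
      if i < j then eV φ i * eV φ j * (x i.succ • pd j.succ f x - x j.succ • pd i.succ f x)
      else 0

/-- The conjugated Gamma operator `Γ̄_0`, with the first sum negated. -/
def Gamma0bar {n : ℕ} {A : Type*} [NormedRing A] [NormedAlgebra ℝ A]
    (φ : CliffordAlgebra (Qneg n) →ₐ[ℝ] A) (f : Esp n → A) (x : Esp n) : A :=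
  (-∑ j : Fin n, eV φ j * (x 0 • pd j.succ f x - x j.succ • pd 0 f x)) -
    ∑ i : Fin n, ∑ j : Fin n,
      if i < j then eV φ i * eV φ j * (x i.succ • pd j.succ f x - x j.succ • pd i.succ f x)
      else 0

/-- The vector part `(x_1, …, x_n)` of `x ∈ ℝ^{n+1}`. -/
def vecPart {n : ℕ} (x : Esp n) : EuclideanSpace ℝ (Fin n) :=
  (WithLp.equiv 2 (Fin n → ℝ)).symm fun i => x i.succ

/-- The paravector `w = x_0 e_0 + Σ_{i=1}^n x_i e_i`, realized in `A`. -/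
def wPara {n : ℕ} {A : Type*} [NormedRing A] [NormedAlgebra ℝ A]
    (φ : CliffordAlgebra (Qneg n) →ₐ[ℝ] A) (x : Esp n) : A :=
  algebraMap ℝ A (x 0) + φ (ι (Qneg n) (vecPart x))

/-- The conjugated paravector `w̄ = x_0 e_0 - Σ_{i=1}^n x_i e_i`, realized in `A`. -/
def wbarPara {n : ℕ} {A : Type*} [NormedRing A] [NormedAlgebra ℝ A]
    (φ : CliffordAlgebra (Qneg n) →ₐ[ℝ] A) (x : Esp n) : A :=
  algebraMap ℝ A (x 0) - φ (ι (Qneg n) (vecPart x))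

namespace Gamma0Aux

section KeyAlg
variable {A : Type*} [Ring A] [Algebra ℝ A] {n : ℕ}

lemma half_sum {M : Type*} [AddCommGroup M] [Module ℝ M] (F : Fin n → Fin n → M)
    (hsym : ∀ i j, F j i = F i j) (hdiag : ∀ i, F i i = 0) :
    (∑ i, ∑ j, if i < j then F i j else 0) = (2⁻¹:ℝ) • ∑ i, ∑ j, F i j := by
  have split : ∀ i j : Fin n, F i j = (if i < j then F i j else 0) + (if j < i then F i j else 0) := by
    intro i j
    rcases lt_trichotomy i j with h|h|h
    · simp [h, not_lt.2 h.le]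
    · subst h; simp [hdiag]
    · simp [h, not_lt.2 h.le]
  have h2 : (∑ i, ∑ j, F i j)
      = (∑ i, ∑ j, if i < j then F i j else 0) + (∑ i, ∑ j, if j < i then F i j else 0) := by
    rw [← Finset.sum_add_distrib]
    apply Finset.sum_congr rfl; intro i _
    rw [← Finset.sum_add_distrib]
    exact Finset.sum_congr rfl fun j _ => split i j
  have h3 : (∑ i : Fin n, ∑ j : Fin n, if j < i then F i j else 0)
      = (∑ i, ∑ j, if i < j then F i j else 0) := by
    rw [Finset.sum_comm]
    exact Finset.sum_congr rfl fun i _ => Finset.sum_congr rfl fun j _ => by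
      by_cases h : i < j <;> simp [h, hsym]
  rw [h3] at h2
  rw [h2, ← two_smul ℝ, smul_smul]
  norm_num

variable (E : Fin n → A) (c : Fin n → ℝ)

lemma sum_cE_mul (X : A) : (∑ k, c k • E k) * X = ∑ k, c k • (E k * X) := by
  rw [Finset.sum_mul]; simp [smul_mul_assoc]

section rel
variable (hE : ∀ i j, E i * E j + E j * E i = (if i = j then (-2:ℝ) else 0) • (1:A))
include hE

lemma rel_EE (j : Fin n) : E j * E j = -1 := by
  have h := hE j j
  simp only [if_pos rfl] at h
  have h2 : (2:ℝ) • (E j * E j) = (-2:ℝ) • (1:A) := by rw [two_smul]; exact h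
  have := congrArg (fun z => (2⁻¹:ℝ) • z) h2
  simpa [smul_smul] using this

lemma rel_swap (i j : Fin n) : E j * E i = (if i = j then (-2:ℝ) else 0) • (1:A) - E i * E j := by
  have h := hE i j
  rw [← h]; abel

lemma rel_Ev (j : Fin n) :
    E j * (∑ k, c k • E k) + (∑ k, c k • E k) * E j = (-2 * c j) • (1:A) := by
  rw [Finset.mul_sum, Finset.sum_mul, ← Finset.sum_add_distrib]
  have h : ∀ k ∈ Finset.univ, E j * (c k • E k) + (c k • E k) * E j
      = (if j = k then (-2 * c k) • (1:A) else 0) := by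
    intro k _
    rw [mul_smul_comm, smul_mul_assoc, ← smul_add, hE j k]
    by_cases h : j = k <;> simp [h, smul_smul]
    ring_nf
  rw [Finset.sum_congr rfl h, Finset.sum_ite_eq]
  simp

lemma rel_vv : (∑ k, c k • E k) * (∑ k, c k • E k) = (-∑ k, c k * c k) • (1:A) := by
  set v := ∑ k, c k • E k with hv
  have h1 : v * v = ∑ j, c j • (E j * v) := by rw [hv]; exact sum_cE_mul E c v
  have h2 : ∀ j ∈ Finset.univ, c j • (E j * v) = (-2 * (c j * c j)) • (1:A) - c j • (v * E j) := by
    intro j _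
    have := rel_Ev E c hE j
    rw [← hv] at this
    have hEj : E j * v = (-2 * c j) • (1:A) - v * E j := by rw [← this]; abel
    rw [hEj, smul_sub, smul_smul]
    ring_nf
  rw [Finset.sum_congr rfl h2, Finset.sum_sub_distrib] at h1
  have h3 : ∑ j, c j • (v * E j) = v * v := by
    rw [Finset.mul_sum]
    exact Finset.sum_congr rfl fun j _ => (mul_smul_comm _ _ _).symm
  rw [h3, ← Finset.sum_smul] at h1
  have h4 : (2:ℝ) • (v * v) = (∑ j, -2 * (c j * c j)) • (1:A) := by
    rw [two_smul]
    calc v * v + v * v = ((∑ j, -2 * (c j * c j)) • (1:A) - v * v) + v * v := by rw [← h1]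
    _ = (∑ j, -2 * (c j * c j)) • (1:A) := by abel
  have := congrArg (fun z => (2⁻¹:ℝ) • z) h4
  simp only [smul_smul] at this
  rw [show (2⁻¹:ℝ) * 2 = 1 by norm_num, one_smul] at this
  rw [this]
  congr 1
  rw [Finset.mul_sum, ← Finset.sum_neg_distrib]
  exact Finset.sum_congr rfl fun k _ => by ring

lemma rel_Ev' (j : Fin n) :
    E j * (∑ k, c k • E k) = (-2 * c j) • (1:A) - (∑ k, c k • E k) * E j := by
  have := rel_Ev E c hE j
  rw [← this]; abel

lemma rel_vE (j : Fin n) :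
    (∑ k, c k • E k) * E j = (-2 * c j) • (1:A) - E j * (∑ k, c k • E k) := by
  have := rel_Ev E c hE j
  rw [← this]; abel

lemma rel_vEE (i j : Fin n) :
    (∑ k, c k • E k) * (E i * E j)
      = E i * (E j * (∑ k, c k • E k)) + (2 * c j) • E i - (2 * c i) • E j := by
  set v := ∑ k, c k • E k with hv
  rw [← mul_assoc, rel_vE E c hE i, sub_mul, smul_mul_assoc, one_mul, mul_assoc,
    rel_vE E c hE j, mul_sub, mul_smul_comm, mul_one]
  module

lemma comm_EW (σ a : ℝ) (W : A) (hW : W = a • 1 - σ • ∑ k, c k • E k) (j : Fin n) :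
    E j * W - W * E j
      = σ • ((2:ℝ) • ((∑ k, c k • E k) * E j) + (2 * c j) • (1:A)) := by
  set v := ∑ k, c k • E k with hv
  rw [hW, mul_sub, sub_mul, mul_smul_comm, smul_mul_assoc, mul_one, one_mul,
    mul_smul_comm, smul_mul_assoc, rel_Ev' E c hE j]
  module

lemma comm_EEW (σ a : ℝ) (W : A) (hW : W = a • 1 - σ • ∑ k, c k • E k) (i j : Fin n) :
    (E i * E j) * W + W * (E i * E j)
      = (2*a) • (E i * E j)
        - σ • ((2:ℝ) • (E i * (E j * (∑ k, c k • E k))) + (2 * c j) • E i - (2 * c i) • E j) := by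
  set v := ∑ k, c k • E k with hv
  rw [hW, mul_sub, sub_mul, mul_smul_comm, smul_mul_assoc, mul_one, one_mul,
    mul_smul_comm, smul_mul_assoc, rel_vEE E c hE i j, mul_assoc]
  module


omit hE in
lemma sum_smul_mul_left (X : A) (f : Fin n → A) :
    ∑ j, c j • (X * f j) = X * ∑ j, c j • f j := by
  rw [Finset.mul_sum]
  exact Finset.sum_congr rfl fun j _ => (mul_smul_comm _ _ _).symm

omit hE in
lemma sum_cE_mul' (X : A) : ∑ j, c j • (E j * X) = (∑ k, c k • E k) * X :=
  (sum_cE_mul E c X).symm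

variable (P : Fin n → A) (G : A)

omit hE in
lemma sumET (a : ℝ) (P0 : A) : ∑ j, E j * (a • P j - c j • P0)
    = a • (∑ j, E j * P j) - (∑ k, c k • E k) * P0 := by
  have h : ∀ j ∈ Finset.univ, E j * (a • P j - c j • P0)
      = a • (E j * P j) - c j • (E j * P0) := by
    intro j _
    rw [mul_sub, mul_smul_comm, mul_smul_comm]
  rw [Finset.sum_congr rfl h, Finset.sum_sub_distrib, ← Finset.smul_sum, sum_cE_mul' E c]

omit hE in
lemma sumcT (a : ℝ) (P0 : A) : ∑ j, c j • (a • P j - c j • P0)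
    = a • (∑ j, c j • P j) - (∑ k, c k * c k) • P0 := by
  have h : ∀ j ∈ Finset.univ, c j • (a • P j - c j • P0)
      = a • (c j • P j) - (c j * c j) • P0 := by
    intro j _
    rw [smul_sub, smul_smul, smul_smul, smul_smul, mul_comm a]
  rw [Finset.sum_congr rfl h, Finset.sum_sub_distrib, ← Finset.smul_sum, ← Finset.sum_smul]

omit hE in
lemma sumJ3a : ∑ i, ∑ j, (c j) • (E i * (c i • P j - c j • P i))
    = (∑ k, c k • E k) * (∑ j, c j • P j) - (∑ k, c k * c k) • ∑ j, E j * P j := by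
  have h : ∀ i ∈ Finset.univ, ∑ j, (c j) • (E i * (c i • P j - c j • P i))
      = c i • (E i * ∑ j, c j • P j) - (∑ k, c k * c k) • (E i * P i) := by
    intro i _
    have h1 : ∀ j ∈ Finset.univ, (c j) • (E i * (c i • P j - c j • P i))
        = c i • (E i * (c j • P j)) - (c j * c j) • (E i * P i) := by
      intro j _
      simp only [mul_sub, smul_sub, mul_smul_comm, smul_smul]
      rw [mul_comm (c j) (c i)]
    rw [Finset.sum_congr rfl h1, Finset.sum_sub_distrib, ← Finset.sum_smul, ← Finset.smul_sum,
      ← Finset.mul_sum]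
  rw [Finset.sum_congr rfl h, Finset.sum_sub_distrib, ← Finset.smul_sum, sum_cE_mul' E c]

omit hE in
lemma sumJ3b : ∑ i, ∑ j, (c i) • (E j * (c i • P j - c j • P i))
    = (∑ k, c k * c k) • (∑ j, E j * P j) - (∑ k, c k • E k) * (∑ j, c j • P j) := by
  have h : ∀ i ∈ Finset.univ, ∑ j, (c i) • (E j * (c i • P j - c j • P i))
      = (c i * c i) • (∑ j, E j * P j) - c i • ((∑ k, c k • E k) * P i) := by
    intro i _
    have h1 : ∀ j ∈ Finset.univ, (c i) • (E j * (c i • P j - c j • P i))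
        = (c i * c i) • (E j * P j) - c i • ((c j • E j) * P i) := by
      intro j _
      simp only [mul_sub, smul_sub, mul_smul_comm, smul_smul, smul_mul_assoc]
    rw [Finset.sum_congr rfl h1, Finset.sum_sub_distrib, ← Finset.smul_sum, ← Finset.smul_sum,
      ← Finset.sum_mul]
  rw [Finset.sum_congr rfl h, Finset.sum_sub_distrib, ← Finset.sum_smul,
    sum_smul_mul_left c (∑ k, c k • E k) P]

lemma rel_EJJ (j : Fin n) (X : A) : E j * (E j * X) = -X := by
  rw [← mul_assoc, rel_EE E hE j, neg_one_mul]

lemma rel_EJE (i j : Fin n) (X : A) :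
    E i * (E j * (E i * X)) = E j * X + (if i = j then (-2:ℝ) else 0) • (E i * X) := by
  rw [show E j * (E i * X) = (E j * E i) * X from (mul_assoc _ _ _).symm, rel_swap E hE i j,
    sub_mul, smul_mul_assoc, one_mul, mul_sub, mul_smul_comm, mul_assoc (E i) (E j) X,
    rel_EJJ E hE i (E j * X)]
  abel

lemma sumS1 : ∑ j, E j * ((∑ k, c k • E k) * P j)
    = -((∑ k, c k • E k) * ∑ j, E j * P j) - (2:ℝ) • ∑ j, c j • P j := by
  have h : ∀ j ∈ Finset.univ, E j * ((∑ k, c k • E k) * P j)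
      = (-2 * c j) • P j - (∑ k, c k • E k) * (E j * P j) := by
    intro j _
    rw [← mul_assoc, rel_Ev' E c hE j, sub_mul, smul_mul_assoc, one_mul, mul_assoc]
  rw [Finset.sum_congr rfl h, Finset.sum_sub_distrib, ← Finset.mul_sum]
  have h2 : ∑ j, (-2 * c j) • P j = -((2:ℝ) • ∑ j, c j • P j) := by
    rw [Finset.smul_sum, ← Finset.sum_neg_distrib]
    exact Finset.sum_congr rfl fun j _ => by rw [smul_smul]; module
  rw [h2]; abel

lemma sumJ1 : ∑ i, ∑ j, E i * E j * (c i • P j - c j • P i)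
    = (2:ℝ) • ((∑ k, c k • E k) * ∑ j, E j * P j) + (2:ℝ) • ∑ j, c j • P j := by
  have h : ∀ i ∈ Finset.univ, ∑ j, E i * E j * (c i • P j - c j • P i)
      = c i • (E i * ∑ j, E j * P j) - E i * ((∑ k, c k • E k) * P i) := by
    intro i _
    have h1 : ∀ j ∈ Finset.univ, E i * E j * (c i • P j - c j • P i)
        = c i • (E i * (E j * P j)) - c j • (E i * (E j * P i)) := by
      intro j _
      simp only [mul_sub, mul_smul_comm, mul_assoc]
    rw [Finset.sum_congr rfl h1, Finset.sum_sub_distrib, ← Finset.smul_sum, ← Finset.mul_sum,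
      sum_smul_mul_left c (E i), sum_cE_mul' E c]
  rw [Finset.sum_congr rfl h, Finset.sum_sub_distrib, sum_cE_mul' E c, sumS1 E c hE P]
  module

lemma sumJ2 : ∑ i, ∑ j, (E i * (E j * (∑ k, c k • E k))) * (c i • P j - c j • P i)
    = ((2:ℝ) * ∑ k, c k * c k) • (∑ j, E j * P j)
      - (2:ℝ) • ((∑ k, c k • E k) * ∑ j, c j • P j) := by
  have hvv := rel_vv E c hE
  have h : ∀ i ∈ Finset.univ, ∑ j, (E i * (E j * (∑ k, c k • E k))) * (c i • P j - c j • P i)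
      = c i • (E i * ∑ j, E j * ((∑ k, c k • E k) * P j))
        - E i * ((∑ k, c k • E k) * ((∑ k, c k • E k) * P i)) := by
    intro i _
    have h1 : ∀ j ∈ Finset.univ, (E i * (E j * (∑ k, c k • E k))) * (c i • P j - c j • P i)
        = c i • (E i * (E j * ((∑ k, c k • E k) * P j)))
          - c j • (E i * (E j * ((∑ k, c k • E k) * P i))) := by
      intro j _
      simp only [mul_sub, mul_smul_comm, mul_assoc]
    rw [Finset.sum_congr rfl h1, Finset.sum_sub_distrib, ← Finset.smul_sum, ← Finset.mul_sum,
      sum_smul_mul_left c (E i), sum_cE_mul' E c]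
  rw [Finset.sum_congr rfl h, Finset.sum_sub_distrib, sum_cE_mul' E c, sumS1 E c hE P]
  have h4 : ∑ i, E i * ((∑ k, c k • E k) * ((∑ k, c k • E k) * P i))
      = (-∑ k, c k * c k) • ∑ j, E j * P j := by
    have h5 : ∀ i ∈ Finset.univ, E i * ((∑ k, c k • E k) * ((∑ k, c k • E k) * P i))
        = (-∑ k, c k * c k) • (E i * P i) := by
      intro i _
      rw [← mul_assoc (∑ k, c k • E k), hvv, smul_mul_assoc, one_mul, mul_smul_comm]
    rw [Finset.sum_congr rfl h5, ← Finset.smul_sum]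
  rw [h4, mul_sub, mul_neg, ← mul_assoc, hvv, smul_mul_assoc, one_mul, mul_smul_comm]
  module

omit hE in
lemma sumJ3b' : ∑ i, c i • ∑ j, E j * (c i • P j - c j • P i)
    = (∑ k, c k * c k) • (∑ j, E j * P j) - (∑ k, c k • E k) * (∑ j, c j • P j) := by
  calc ∑ i, c i • ∑ j, E j * (c i • P j - c j • P i)
      = ∑ i, ∑ j, c i • (E j * (c i • P j - c j • P i)) :=
        Finset.sum_congr rfl fun i _ => Finset.smul_sum
    _ = _ := sumJ3b E c P

lemma sumC2 : ∑ i, ∑ j, E i * E j * (c i • (E j * G) - c j • (E i * G))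
    = ((2:ℝ) - 2 * (n:ℝ)) • ((∑ k, c k • E k) * G) := by
  have h6 : ∑ i, c i • (E i * G) = (∑ k, c k • E k) * G := sum_cE_mul' E c G
  have h3 : ∑ i, (-2 * c i) • (E i * G) = (-2 :ℝ) • ((∑ k, c k • E k) * G) := by
    rw [← h6, Finset.smul_sum]
    exact Finset.sum_congr rfl fun i _ => by rw [smul_smul]
  have h : ∀ i ∈ Finset.univ, ∑ j, E i * E j * (c i • (E j * G) - c j • (E i * G))
      = (n:ℝ) • (-(c i • (E i * G)))
        - ((-2 * c i) • (E i * G) + (∑ k, c k • E k) * G) := by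
    intro i _
    have h2 : ∀ j ∈ Finset.univ, E i * E j * (c i • (E j * G) - c j • (E i * G))
        = -(c i • (E i * G))
          - ((if i = j then (-2:ℝ) else 0) • (c j • (E i * G)) + c j • (E j * G)) := by
      intro j _
      simp only [mul_sub, mul_smul_comm, mul_assoc]
      rw [rel_EJJ E hE j G, rel_EJE E hE i j G]
      simp only [mul_neg]
      module
    rw [Finset.sum_congr rfl h2, Finset.sum_sub_distrib, Finset.sum_const, Finset.card_univ,
      Fintype.card_fin, ← Nat.cast_smul_eq_nsmul ℝ, Finset.sum_add_distrib]
    have e1 : (∑ j, (if i = j then (-2:ℝ) else 0) • (c j • (E i * G))) = (-2 * c i) • (E i * G) := by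
      simp only [ite_smul, zero_smul]
      rw [Finset.sum_ite_eq]
      simp [smul_smul]
    rw [e1, sum_cE_mul' E c]
  rw [Finset.sum_congr rfl h, Finset.sum_sub_distrib, Finset.sum_add_distrib, ← Finset.smul_sum,
    Finset.sum_neg_distrib, h6, h3, Finset.sum_const, Finset.card_univ, Fintype.card_fin,
    ← Nat.cast_smul_eq_nsmul ℝ]
  module

lemma key (σ : ℝ) (hσ : σ * σ = 1) (a : ℝ) (G0 P0 : A) (Pf : Fin n → A)
    (W : A) (hW : W = a • 1 - σ • ∑ k, c k • E k)
    (M0 : A) (hM0 : M0 = G0 + W * P0)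
    (M : Fin n → A) (hM : ∀ j, M j = (-σ) • (E j * G0) + W * Pf j) :
    σ • (∑ j, E j * (a • M j - c j • M0))
      - (∑ i, ∑ j, if i < j then E i * E j * (c i • M j - c j • M i) else 0)
    = (n : ℝ) • (W * G0)
      - W * ((-σ) • (∑ j, E j * (a • Pf j - c j • P0))
        - ∑ i, ∑ j, if i < j then E i * E j * (c i • Pf j - c j • Pf i) else 0) := by
  -- half-sum conversions
  have hsymgen : ∀ (N : Fin n → A), ∀ i j : Fin n,
      E j * E i * (c j • N i - c i • N j) = E i * E j * (c i • N j - c j • N i) := by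
    intro N i j
    by_cases h : i = j
    · subst h; simp
    · rw [rel_swap E hE i j, if_neg h, zero_smul, zero_sub, neg_mul,
        show c j • N i - c i • N j = -(c i • N j - c j • N i) by abel, mul_neg, neg_neg]
  have hdiaggen : ∀ (N : Fin n → A), ∀ i : Fin n,
      E i * E i * (c i • N i - c i • N i) = 0 := by
    intro N i; simp
  rw [half_sum (fun i j => E i * E j * (c i • M j - c j • M i)) (hsymgen M) (hdiaggen M),
    half_sum (fun i j => E i * E j * (c i • Pf j - c j • Pf i)) (hsymgen Pf) (hdiaggen Pf)]
  -- expand the first LHS sum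
  have hL1 : ∑ j, E j * (a • M j - c j • M0)
      = ((n:ℝ) * (σ * a)) • G0 - (∑ k, c k • E k) * G0
        + ∑ j, E j * (W * (a • Pf j - c j • P0)) := by
    have hterm : ∀ j ∈ Finset.univ, E j * (a • M j - c j • M0)
        = (σ * a) • G0 - c j • (E j * G0) + E j * (W * (a • Pf j - c j • P0)) := by
      intro j _
      have e : a • M j - c j • M0
          = (-(σ * a)) • (E j * G0) - c j • G0 + W * (a • Pf j - c j • P0) := by
        rw [hM j, hM0, mul_sub W, mul_smul_comm a W, mul_smul_comm (c j) W]
        module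
      rw [e, mul_add, mul_sub, mul_smul_comm, mul_smul_comm, rel_EJJ E hE j G0]
      module
    rw [Finset.sum_congr rfl hterm, Finset.sum_add_distrib, Finset.sum_sub_distrib,
      Finset.sum_const, Finset.card_univ, Fintype.card_fin, ← Nat.cast_smul_eq_nsmul ℝ,
      sum_cE_mul' E c, smul_smul]
  -- expand the LHS double sum
  have hL2 : ∑ i, ∑ j, E i * E j * (c i • M j - c j • M i)
      = (-σ) • (((2:ℝ) - 2*(n:ℝ)) • ((∑ k, c k • E k) * G0))
        + ∑ i, ∑ j, E i * E j * (W * (c i • Pf j - c j • Pf i)) := by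
    have hterm : ∀ i ∈ Finset.univ, ∀ j ∈ Finset.univ,
        E i * E j * (c i • M j - c j • M i)
        = (-σ) • (E i * E j * (c i • (E j * G0) - c j • (E i * G0)))
          + E i * E j * (W * (c i • Pf j - c j • Pf i)) := by
      intro i _ j _
      have e : c i • M j - c j • M i
          = (-σ) • (c i • (E j * G0) - c j • (E i * G0)) + W * (c i • Pf j - c j • Pf i) := by
        rw [hM i, hM j, mul_sub W, mul_smul_comm (c i) W, mul_smul_comm (c j) W]
        module
      rw [e, mul_add, mul_smul_comm]
    calc ∑ i, ∑ j, E i * E j * (c i • M j - c j • M i)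
        = ∑ i, ∑ j, ((-σ) • (E i * E j * (c i • (E j * G0) - c j • (E i * G0)))
          + E i * E j * (W * (c i • Pf j - c j • Pf i))) :=
          Finset.sum_congr rfl fun i hi => Finset.sum_congr rfl fun j hj => hterm i hi j hj
      _ = (-σ) • (∑ i, ∑ j, E i * E j * (c i • (E j * G0) - c j • (E i * G0)))
          + ∑ i, ∑ j, E i * E j * (W * (c i • Pf j - c j • Pf i)) := by
          simp only [Finset.sum_add_distrib, ← Finset.smul_sum]
      _ = _ := by rw [sumC2 E c hE G0]
  -- expand the RHS product
  have hR : W * ((-σ) • (∑ j, E j * (a • Pf j - c j • P0))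
        - (2⁻¹:ℝ) • ∑ i, ∑ j, E i * E j * (c i • Pf j - c j • Pf i))
      = (-σ) • (∑ j, W * (E j * (a • Pf j - c j • P0)))
        - (2⁻¹:ℝ) • ∑ i, ∑ j, W * (E i * E j * (c i • Pf j - c j • Pf i)) := by
    simp only [mul_sub, mul_smul_comm, Finset.mul_sum]
  -- the core commutator identities
  have hXY : ∀ j : Fin n, E j * (W * (a • Pf j - c j • P0)) - W * (E j * (a • Pf j - c j • P0))
      = (2:ℝ) • (σ • ((∑ k, c k • E k) * (E j * (a • Pf j - c j • P0))))
        + σ • ((2:ℝ) • (c j • (a • Pf j - c j • P0))) := by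
    intro j
    have hc := comm_EW E c hE σ a W hW j
    calc E j * (W * (a • Pf j - c j • P0)) - W * (E j * (a • Pf j - c j • P0))
        = (E j * W - W * E j) * (a • Pf j - c j • P0) := by
          simp only [sub_mul, mul_assoc]
      _ = _ := by
          rw [hc, smul_mul_assoc, add_mul, smul_mul_assoc, smul_mul_assoc, one_mul, mul_assoc,
            ← smul_smul]
          module
  have hXY2 : ∀ i j : Fin n,
      E i * E j * (W * (c i • Pf j - c j • Pf i)) + W * (E i * E j * (c i • Pf j - c j • Pf i))
      = (2*a) • (E i * E j * (c i • Pf j - c j • Pf i))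
        - σ • ((2:ℝ) • ((E i * (E j * (∑ k, c k • E k))) * (c i • Pf j - c j • Pf i))
          + (2:ℝ) • (c j • (E i * (c i • Pf j - c j • Pf i)))
          - (2:ℝ) • (c i • (E j * (c i • Pf j - c j • Pf i)))) := by
    intro i j
    have hc := comm_EEW E c hE σ a W hW i j
    calc E i * E j * (W * (c i • Pf j - c j • Pf i))
          + W * (E i * E j * (c i • Pf j - c j • Pf i))
        = ((E i * E j) * W + W * (E i * E j)) * (c i • Pf j - c j • Pf i) := by
          simp only [add_mul, mul_assoc]
      _ = _ := by
          rw [hc]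
          simp only [sub_mul, add_mul, smul_mul_assoc, mul_assoc]
          module
  -- summed versions
  have hD1 : (∑ j, E j * (W * (a • Pf j - c j • P0)))
      - (∑ j, W * (E j * (a • Pf j - c j • P0)))
      = σ • ((2*a) • ((∑ k, c k • E k) * ∑ j, E j * Pf j) + (2*a) • ∑ j, c j • Pf j) := by
    rw [← Finset.sum_sub_distrib,
      Finset.sum_congr rfl (fun j _ => hXY j)]
    simp only [Finset.sum_add_distrib, ← Finset.smul_sum]
    rw [← Finset.mul_sum, sumET E c Pf a P0, sumcT c Pf a P0, mul_sub, mul_smul_comm,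
      ← mul_assoc, rel_vv E c hE, smul_mul_assoc, one_mul]
    module
  have hD2 : (∑ i, ∑ j, E i * E j * (W * (c i • Pf j - c j • Pf i)))
      + (∑ i, ∑ j, W * (E i * E j * (c i • Pf j - c j • Pf i)))
      = (2*a) • ((2:ℝ) • ((∑ k, c k • E k) * ∑ j, E j * Pf j) + (2:ℝ) • ∑ j, c j • Pf j) := by
    have e1 : (∑ i, ∑ j, E i * E j * (W * (c i • Pf j - c j • Pf i)))
        + (∑ i, ∑ j, W * (E i * E j * (c i • Pf j - c j • Pf i)))
        = ∑ i, ∑ j, (E i * E j * (W * (c i • Pf j - c j • Pf i))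
            + W * (E i * E j * (c i • Pf j - c j • Pf i))) := by
      simp only [Finset.sum_add_distrib]
    rw [e1, Finset.sum_congr rfl (fun i _ => Finset.sum_congr rfl (fun j _ => hXY2 i j))]
    simp only [Finset.sum_add_distrib, Finset.sum_sub_distrib, ← Finset.smul_sum]
    rw [sumJ1 E c hE Pf, sumJ2 E c hE Pf, sumJ3a E c Pf, sumJ3b' E c Pf]
    module
  -- assemble
  have hWG : W * G0 = a • G0 - σ • ((∑ k, c k • E k) * G0) := by
    rw [hW, sub_mul, smul_mul_assoc, one_mul, smul_mul_assoc]
  rw [hL1, hL2, hR, hWG]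
  rcases mul_self_eq_one_iff.mp hσ with h1 | h1
  · subst h1
    linear_combination (norm := module) (1:ℝ) • hD1 - (2⁻¹:ℝ) • hD2
  · subst h1
    linear_combination (norm := module) (-1:ℝ) • hD1 - (2⁻¹:ℝ) • hD2

end rel
end KeyAlg
end Gamma0Aux

section Gamma0Analysis
open Gamma0Aux
variable {n : ℕ} {A : Type*} [NormedRing A] [NormedAlgebra ℝ A]

/-- The paravector map as a continuous linear map. -/
def wLin (φ : CliffordAlgebra (Qneg n) →ₐ[ℝ] A) : Esp n →L[ℝ] A :=
  LinearMap.toContinuousLinearMap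
  { toFun := wPara φ
    map_add' := fun x y => by
      show algebraMap ℝ A (x 0 + y 0) + φ (ι (Qneg n) (vecPart x + vecPart y)) = _
      rw [map_add, map_add, map_add]
      show _ = (algebraMap ℝ A (x 0) + _) + (algebraMap ℝ A (y 0) + _)
      abel
    map_smul' := fun c x => by
      show algebraMap ℝ A (c * x 0) + φ (ι (Qneg n) (c • vecPart x)) = c • wPara φ x
      rw [map_mul, map_smul, map_smul, wPara, smul_add, Algebra.algebraMap_eq_smul_one,
        Algebra.algebraMap_eq_smul_one, smul_mul_assoc, one_mul] }

lemma wLin_apply (φ : CliffordAlgebra (Qneg n) →ₐ[ℝ] A) (x : Esp n) :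
    wLin φ x = wPara φ x := rfl

lemma hasFDerivAt_wPara (φ : CliffordAlgebra (Qneg n) →ₐ[ℝ] A) (x : Esp n) :
    HasFDerivAt (wPara φ) (wLin φ : Esp n →L[ℝ] A) x :=
  (wLin φ).hasFDerivAt (x := x)

/-- The conjugated paravector map as a continuous linear map. -/
def wbarLin (φ : CliffordAlgebra (Qneg n) →ₐ[ℝ] A) : Esp n →L[ℝ] A :=
  LinearMap.toContinuousLinearMap
  { toFun := wbarPara φ
    map_add' := fun x y => by
      show algebraMap ℝ A (x 0 + y 0) - φ (ι (Qneg n) (vecPart x + vecPart y)) = _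
      rw [map_add, map_add, map_add]
      show _ = (algebraMap ℝ A (x 0) - _) + (algebraMap ℝ A (y 0) - _)
      abel
    map_smul' := fun c x => by
      show algebraMap ℝ A (c * x 0) - φ (ι (Qneg n) (c • vecPart x)) = c • wbarPara φ x
      rw [map_mul, map_smul, map_smul, wbarPara, smul_sub, Algebra.algebraMap_eq_smul_one,
        Algebra.algebraMap_eq_smul_one, smul_mul_assoc, one_mul] }

lemma wbarLin_apply (φ : CliffordAlgebra (Qneg n) →ₐ[ℝ] A) (x : Esp n) :
    wbarLin φ x = wbarPara φ x := rfl

lemma hasFDerivAt_wbarPara (φ : CliffordAlgebra (Qneg n) →ₐ[ℝ] A) (x : Esp n) :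
    HasFDerivAt (wbarPara φ) (wbarLin φ : Esp n →L[ℝ] A) x :=
  (wbarLin φ).hasFDerivAt (x := x)

lemma vecPart_single_zero : vecPart (EuclideanSpace.single (0 : Fin (n+1)) (1:ℝ)) = 0 := by
  ext k
  simp [vecPart, EuclideanSpace.single_apply, (Fin.succ_ne_zero k)]

lemma vecPart_single_succ (j : Fin n) :
    vecPart (EuclideanSpace.single (j.succ : Fin (n+1)) (1:ℝ)) = EuclideanSpace.single j 1 := by
  ext k
  simp [vecPart, EuclideanSpace.single_apply, Fin.succ_inj]

lemma pd_wPara_zero (φ : CliffordAlgebra (Qneg n) →ₐ[ℝ] A) (x : Esp n) :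
    pd 0 (wPara φ) x = 1 := by
  rw [pd, (hasFDerivAt_wPara φ x).fderiv, wLin_apply, wPara]
  simp [vecPart_single_zero, EuclideanSpace.single_apply]

lemma pd_wPara_succ (φ : CliffordAlgebra (Qneg n) →ₐ[ℝ] A) (x : Esp n) (j : Fin n) :
    pd j.succ (wPara φ) x = eV φ j := by
  rw [pd, (hasFDerivAt_wPara φ x).fderiv, wLin_apply, wPara]
  simp [vecPart_single_succ, EuclideanSpace.single_apply, (Fin.succ_ne_zero j).symm, eV]

lemma pd_wbarPara_zero (φ : CliffordAlgebra (Qneg n) →ₐ[ℝ] A) (x : Esp n) :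
    pd 0 (wbarPara φ) x = 1 := by
  rw [pd, (hasFDerivAt_wbarPara φ x).fderiv, wbarLin_apply, wbarPara]
  simp [vecPart_single_zero, EuclideanSpace.single_apply]

lemma pd_wbarPara_succ (φ : CliffordAlgebra (Qneg n) →ₐ[ℝ] A) (x : Esp n) (j : Fin n) :
    pd j.succ (wbarPara φ) x = -eV φ j := by
  rw [pd, (hasFDerivAt_wbarPara φ x).fderiv, wbarLin_apply, wbarPara]
  simp [vecPart_single_succ, EuclideanSpace.single_apply, (Fin.succ_ne_zero j).symm, eV]

lemma polar_Qneg_single (i j : Fin n) :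
    QuadraticMap.polar (Qneg n) (EuclideanSpace.single i (1:ℝ)) (EuclideanSpace.single j 1)
      = if i = j then (-2:ℝ) else 0 := by
  simp only [Qneg, QuadraticMap.polar, QuadraticMap.neg_apply,
    LinearMap.BilinMap.toQuadraticMap_apply, innerₗ_apply_apply, map_add]
  simp only [real_inner_add_add_self, EuclideanSpace.inner_single_left, conj_trivial,
    EuclideanSpace.single_apply, real_inner_self_eq_norm_sq]
  by_cases h : i = j <;> simp [h, EuclideanSpace.single_apply, eq_comm, EuclideanSpace.inner_single_left] <;> ring_nf

lemma hE_eV (φ : CliffordAlgebra (Qneg n) →ₐ[ℝ] A) (i j : Fin n) :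
    eV φ i * eV φ j + eV φ j * eV φ i = (if i = j then (-2:ℝ) else 0) • (1:A) := by
  have h := ι_mul_ι_add_swap (Q := Qneg n) (EuclideanSpace.single i 1) (EuclideanSpace.single j 1)
  have h2 := congrArg φ h
  simp only [map_add, map_mul, AlgHom.commutes] at h2
  rw [eV, eV, h2, polar_Qneg_single, Algebra.algebraMap_eq_smul_one]

lemma vecPart_eq_sum (x : Esp n) :
    vecPart x = ∑ k, x k.succ • EuclideanSpace.single k (1:ℝ) := by
  ext i
  rw [show (∑ k, x k.succ • EuclideanSpace.single k (1:ℝ)) i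
      = ∑ k, (x k.succ • EuclideanSpace.single k (1:ℝ)) i from by
    rw [WithLp.ofLp_sum, Finset.sum_apply]]
  simp [vecPart, EuclideanSpace.single_apply]

lemma phi_vecPart (φ : CliffordAlgebra (Qneg n) →ₐ[ℝ] A) (x : Esp n) :
    φ (ι (Qneg n) (vecPart x)) = ∑ k, x k.succ • eV φ k := by
  rw [vecPart_eq_sum, map_sum, map_sum]
  exact Finset.sum_congr rfl fun k _ => by rw [map_smul, map_smul]; rfl

lemma pd_mul_wbar (φ : CliffordAlgebra (Qneg n) →ₐ[ℝ] A) {g : Esp n → A} {x : Esp n}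
    (hgd : DifferentiableAt ℝ g x) (k : Fin (n+1)) :
    pd k (fun y => wbarPara φ y * g y) x
      = pd k (wbarPara φ) x * g x + wbarPara φ x * pd k g x := by
  rw [pd, fderiv_fun_mul' ((hasFDerivAt_wbarPara φ x).differentiableAt) hgd,
    ContinuousLinearMap.add_apply, ContinuousLinearMap.smul_apply,
    ContinuousLinearMap.smul_apply, op_smul_eq_mul, smul_eq_mul, pd, pd]
  ring_nf
  abel

lemma pd_mul_w (φ : CliffordAlgebra (Qneg n) →ₐ[ℝ] A) {g : Esp n → A} {x : Esp n}
    (hgd : DifferentiableAt ℝ g x) (k : Fin (n+1)) :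
    pd k (fun y => wPara φ y * g y) x
      = pd k (wPara φ) x * g x + wPara φ x * pd k g x := by
  rw [pd, fderiv_fun_mul' ((hasFDerivAt_wPara φ x).differentiableAt) hgd,
    ContinuousLinearMap.add_apply, ContinuousLinearMap.smul_apply,
    ContinuousLinearMap.smul_apply, op_smul_eq_mul, smul_eq_mul, pd, pd]
  ring_nf
  abel

end Gamma0Analysis

/-- On the unit sphere, `Γ_0 (w̄ g) = n w̄ g - w̄ (Γ̄_0 g)` and
`Γ̄_0 (w g) = n w g - w (Γ_0 g)` for smooth `Cl_n`-valued `g`, where `w` is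
(multiplication by) the paravector variable. -/
theorem gamma0_intertwine {n : ℕ} {A : Type*} [NormedRing A] [NormedAlgebra ℝ A]
    (φ : CliffordAlgebra (Qneg n) →ₐ[ℝ] A) (hφ : Function.Injective φ)
    (g : Esp n → A) (hg : ContDiff ℝ (⊤ : ℕ∞) g) :
    ∀ x : Esp n, ‖x‖ = 1 →
      (Gamma0 φ (fun y => wbarPara φ y * g y) x
          = (n : ℝ) • (wbarPara φ x * g x) - wbarPara φ x * Gamma0bar φ g x) ∧
      (Gamma0bar φ (fun y => wPara φ y * g y) x
          = (n : ℝ) • (wPara φ x * g x) - wPara φ x * Gamma0 φ g x) := by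
  intro x hx
  have hE := hE_eV φ
  have hgd : ∀ y, DifferentiableAt ℝ g y := fun y =>
    (hg.differentiable (by simp)).differentiableAt
  constructor
  · have hW : wbarPara φ x = (x 0) • (1:A) - (1:ℝ) • ∑ k, (x k.succ) • eV φ k := by
      rw [wbarPara, Algebra.algebraMap_eq_smul_one, phi_vecPart, one_smul]
    have hM0 : pd 0 (fun y => wbarPara φ y * g y) x = g x + wbarPara φ x * pd 0 g x := by
      rw [pd_mul_wbar φ (hgd x) 0, pd_wbarPara_zero, one_mul]
    have hM : ∀ j : Fin n, pd j.succ (fun y => wbarPara φ y * g y) x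
        = (-(1:ℝ)) • (eV φ j * g x) + wbarPara φ x * pd j.succ g x := by
      intro j
      rw [pd_mul_wbar φ (hgd x) j.succ, pd_wbarPara_succ, neg_mul]
      module
    have hkey := Gamma0Aux.key (eV φ) (fun k => x k.succ) hE 1 (by norm_num) (x 0) (g x)
      (pd 0 g x) (fun j => pd j.succ g x) (wbarPara φ x) hW _ hM0 _ hM
    rw [Gamma0, Gamma0bar]
    simp only [one_smul, neg_one_smul, neg_smul] at hkey
    exact hkey
  · have hW : wPara φ x = (x 0) • (1:A) - (-1:ℝ) • ∑ k, (x k.succ) • eV φ k := by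
      rw [wPara, Algebra.algebraMap_eq_smul_one, phi_vecPart]
      module
    have hM0 : pd 0 (fun y => wPara φ y * g y) x = g x + wPara φ x * pd 0 g x := by
      rw [pd_mul_w φ (hgd x) 0, pd_wPara_zero, one_mul]
    have hM : ∀ j : Fin n, pd j.succ (fun y => wPara φ y * g y) x
        = (-(-1:ℝ)) • (eV φ j * g x) + wPara φ x * pd j.succ g x := by
      intro j
      rw [pd_mul_w φ (hgd x) j.succ, pd_wPara_succ]
      module
    have hkey := Gamma0Aux.key (eV φ) (fun k => x k.succ) hE (-1) (by norm_num) (x 0) (g x)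
      (pd 0 g x) (fun j => pd j.succ g x) (wPara φ x) hW _ hM0 _ hM
    rw [Gamma0bar, Gamma0]
    simp only [neg_neg, one_smul, neg_one_smul, neg_smul] at hkey
    exact hkey


end
end

section
/- The spherical Dirac operator D_s = w(Γ_0 - n/2) satisfies D_s* = -D̄_s with respect to the Cl_n-valued L^2 inner product on compactly supported smooth functions: ⟨D_s f, g⟩ = ⟨f, -D̄_s g⟩. -/
open scoped RealInnerProductSpace

/-- Let `Γ₀` be the spherical Gamma operator and `W`, `W̄` left
multiplication by the paravector `w` and its Clifford conjugate `w̄`, acting on compactly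
supported smooth `Cl_n`-valued functions on `Sⁿ` with the `L²` inner product `⟨u,v⟩ = ∫ ū v`.
`Γ₀` (and `Γ̄₀`) are formally self-adjoint, `W` is adjoint to `W̄`, and
`Γ₀ W̄ = n W̄ - W̄ Γ̄₀`.  Then the spherical Dirac operator `D_s = W (Γ₀ - n/2)` satisfies
`D_s* = -D̄_s`, i.e. `⟨D_s f, g⟩ = ⟨f, -D̄_s g⟩` for all `f, g`. -/
theorem spherical_dirac_adjoint (n : ℕ)
    {V : Type*} [NormedAddCommGroup V] [InnerProductSpace ℝ V]
    (W Wb Γ Γb : Module.End ℝ V)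
    (hΓ_selfadj : ∀ f g : V, ⟪Γ f, g⟫ = ⟪f, Γ g⟫)
    (hΓb_selfadj : ∀ f g : V, ⟪Γb f, g⟫ = ⟪f, Γb g⟫)
    (hW_adj : ∀ f g : V, ⟪W f, g⟫ = ⟪f, Wb g⟫)
    (hΓWb : Γ * Wb = (n : ℝ) • Wb - Wb * Γb)
    (Ds Dsb : Module.End ℝ V)
    (hDs : Ds = W * (Γ - ((n : ℝ) / 2) • 1))
    (hDsb : Dsb = Wb * (Γb - ((n : ℝ) / 2) • 1)) :
    ∀ f g : V, ⟪Ds f, g⟫ = ⟪f, -(Dsb g)⟫ := by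
  intro f g
  have hcomm : ∀ x : V, Γ (Wb x) = (n : ℝ) • Wb x - Wb (Γb x) := by
    intro x
    have := congrArg (fun T : Module.End ℝ V => T x) hΓWb
    simpa [Module.End.mul_apply] using this
  have h1 : Ds f = W (Γ f - ((n : ℝ) / 2) • f) := by
    simp [hDs, Module.End.mul_apply, LinearMap.sub_apply]
  have h2 : Dsb g = Wb (Γb g - ((n : ℝ) / 2) • g) := by
    simp [hDsb, Module.End.mul_apply, LinearMap.sub_apply]
  rw [h1, h2, hW_adj]
  rw [show (⟪f, -(Wb (Γb g - ((n : ℝ) / 2) • g))⟫ : ℝ)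
      = ⟪f, -(Wb (Γb g)) + ((n : ℝ) / 2) • Wb g⟫ by
    congr 1
    rw [map_sub, map_smul]
    abel]
  rw [inner_sub_left, inner_smul_left, hΓ_selfadj, hcomm g, inner_sub_right,
    inner_add_right, inner_neg_right, inner_smul_right, inner_smul_right]
  simp only [starRingEnd_apply, star_trivial]
  ring
end
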